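/- Let A be a measurable set. The following are equivalent: (i) A is a T-atom; (ii) A is T-convex with μ(A) > 0, and every T-convex set B with B ⊆ A a.e. satisfies μ(B) = 0 or B = A a.e.; (iii) A is T-admissible and T-irreducible; (iv) A is T-irreducible and every T-irreducible set A' with A ⊆ A' a.e. satisfies A' = A a.e. -/

import Mathlib

/-!
Call `A` indecomposable if it lies a.e. on one side of every `T`-invariant set. The sets on one
side of which `A` lies form a σ-algebra, so an indecomposable set also lies on one side of every
admissible set: atoms are exactly the admissible indecomposable sets of positive measure, and
irreducible sets are indecomposable. Conversely, if `A` is convex, a `T_A`-invariant `B ⊆ A` is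
the trace on `A` of the `T`-invariant set `B ∪ (F(B) \ P(A \ B))`, so convex indecomposable sets
are irreducible. The traces on `A` of invariant sets are again convex, and the hull
`F(A) ∩ P(A)` of an indecomposable set is convex and indecomposable; this turns the minimality
in (ii) and the maximality in (iv) into indecomposability. Futures and pasts exist because `μ`
is σ-finite and, for pasts, because continuity of `T` and `p < ∞` make countable unions of
invariant sets invariant.
-/

open MeasureTheory ENNReal Filter Set

noncomputable section

namespace PaperAtoms

variable {Ω : Type*} [MeasurableSpace Ω] {μ : MeasureTheory.Measure Ω} {p : ℝ≥0∞} [Fact (1 ≤ p)]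

/-- `T` is a positive operator on `Lp`. -/
def IsPositiveOp (T : Lp ℝ p μ →L[ℝ] Lp ℝ p μ) : Prop :=
  ∀ f : Lp ℝ p μ, 0 ≤ f → 0 ≤ T f

/-- A measurable set `A` is `T`-invariant if `T f` vanishes a.e. on `Aᶜ` for every
nonnegative `f ∈ Lp` vanishing a.e. on `Aᶜ`. -/
def Invariant (T : Lp ℝ p μ →L[ℝ] Lp ℝ p μ) (A : Set Ω) : Prop :=
  MeasurableSet A ∧
    ∀ f : Lp ℝ p μ, 0 ≤ f → (∀ᵐ x ∂μ, x ∉ A → f x = 0) → ∀ᵐ x ∂μ, x ∉ A → T f x = 0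

/-- `A` is `T`-co-invariant if `Aᶜ` is `T`-invariant. -/
def CoInvariant (T : Lp ℝ p μ →L[ℝ] Lp ℝ p μ) (A : Set Ω) : Prop :=
  Invariant T Aᶜ

/-- `A` is `T`-admissible if it belongs to the σ-field generated by the `T`-invariant sets. -/
def Admissible (T : Lp ℝ p μ →L[ℝ] Lp ℝ p μ) (A : Set Ω) : Prop :=
  MeasurableSet[MeasurableSpace.generateFrom {B : Set Ω | Invariant T B}] A

/-- A `T`-atom is a minimal `T`-admissible set with positive measure. -/
def Atom (T : Lp ℝ p μ →L[ℝ] Lp ℝ p μ) (A : Set Ω) : Prop :=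
  Admissible T A ∧ 0 < μ A ∧
    ∀ B : Set Ω, Admissible T B → B ≤ᵐ[μ] A → μ B = 0 ∨ B =ᵐ[μ] A

/-- `FA` is (a version of) the future of `A`: the minimal `T`-invariant set containing `A` a.e. -/
def IsFuture (T : Lp ℝ p μ →L[ℝ] Lp ℝ p μ) (A FA : Set Ω) : Prop :=
  Invariant T FA ∧ A ≤ᵐ[μ] FA ∧
    ∀ B : Set Ω, Invariant T B → A ≤ᵐ[μ] B → FA ≤ᵐ[μ] B

/-- `PA` is (a version of) the past of `A`: the minimal `T`-co-invariant set containing `A` a.e. -/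
def IsPast (T : Lp ℝ p μ →L[ℝ] Lp ℝ p μ) (A PA : Set Ω) : Prop :=
  CoInvariant T PA ∧ A ≤ᵐ[μ] PA ∧
    ∀ B : Set Ω, CoInvariant T B → A ≤ᵐ[μ] B → PA ≤ᵐ[μ] B

/-- `A` is `T`-convex if `A = F(A) ∩ P(A)` a.e. -/
def Convexe (T : Lp ℝ p μ →L[ℝ] Lp ℝ p μ) (A : Set Ω) : Prop :=
  MeasurableSet A ∧
    ∃ FA PA : Set Ω, IsFuture T A FA ∧ IsPast T A PA ∧ A =ᵐ[μ] (FA ∩ PA : Set Ω)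

/-- Multiplication by the indicator function of `A`, as a bounded operator on `Lp`
(defined as `0` if `A` is not measurable). -/
def indicatorCLM (μ : MeasureTheory.Measure Ω) (p : ℝ≥0∞) [Fact (1 ≤ p)] (A : Set Ω) :
    Lp ℝ p μ →L[ℝ] Lp ℝ p μ := by
  classical
  exact if hA : MeasurableSet A then
    LinearMap.mkContinuous
      { toFun := fun f => ((Lp.memLp f).indicator hA).toLp (A.indicator f)
        map_add' := fun f g => by
          rw [← MemLp.toLp_add]
          refine MemLp.toLp_congr _ _ ?_
          filter_upwards [Lp.coeFn_add f g] with x hx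
          simp only [Pi.add_apply, Set.indicator_apply, hx]
          split <;> simp
        map_smul' := fun c f => by
          rw [RingHom.id_apply, ← MemLp.toLp_const_smul]
          refine MemLp.toLp_congr _ _ ?_
          filter_upwards [Lp.coeFn_smul c f] with x hx
          simp only [Pi.smul_apply, Set.indicator_apply, hx, smul_eq_mul]
          split <;> simp }
      1
      (fun f => by
        simp only [LinearMap.coe_mk, AddHom.coe_mk, one_mul]
        rw [Lp.norm_toLp, Lp.norm_def]
        exact ENNReal.toReal_mono (Lp.eLpNorm_ne_top f) (eLpNorm_indicator_le _))
  else 0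

/-- The restriction `T_A = 1_A T 1_A` of `T` to a measurable set `A`. -/
def restrictOp (T : Lp ℝ p μ →L[ℝ] Lp ℝ p μ) (A : Set Ω) : Lp ℝ p μ →L[ℝ] Lp ℝ p μ :=
  (indicatorCLM μ p A).comp (T.comp (indicatorCLM μ p A))

/-- The spectral radius of a bounded operator, via Gelfand's formula
`ρ(T) = inf_n ‖Tⁿ‖^(1/n) = lim_n ‖Tⁿ‖^(1/n)`. -/
def specRadius (T : Lp ℝ p μ →L[ℝ] Lp ℝ p μ) : ℝ :=
  ⨅ n : ℕ, ‖T ^ (n + 1)‖ ^ (((n : ℝ) + 1)⁻¹)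

/-- The spectral radius `ρ(A)` of the restriction of `T` to `A`. -/
def rhoSet (T : Lp ℝ p μ →L[ℝ] Lp ℝ p μ) (A : Set Ω) : ℝ :=
  specRadius (restrictOp T A)

/-- A measurable set `A` with `μ A > 0` is `T`-irreducible if the restriction of `T` to `A`
is irreducible, i.e. every `T_A`-invariant subset of `A` is a.e. trivial. -/
def Irreducible (T : Lp ℝ p μ →L[ℝ] Lp ℝ p μ) (A : Set Ω) : Prop :=
  MeasurableSet A ∧ 0 < μ A ∧
    ∀ B : Set Ω, Invariant (restrictOp T A) B → B ≤ᵐ[μ] A → μ B = 0 ∨ B =ᵐ[μ] A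

/-- `T` is power compact if some power `T^k`, `k ≥ 1`, is a compact operator. -/
def PowerCompact (T : Lp ℝ p μ →L[ℝ] Lp ℝ p μ) : Prop :=
  ∃ k : ℕ, 1 ≤ k ∧ IsCompactOperator (⇑(T ^ k))

/-- `B ≼ A` for atoms: `B ⊆ F(A)` a.e. -/
def Prec (T : Lp ℝ p μ →L[ℝ] Lp ℝ p μ) (B A : Set Ω) : Prop :=
  ∃ FA : Set Ω, IsFuture T A FA ∧ B ≤ᵐ[μ] FA

/-- `B ≺ A` for atoms: `B ⊆ F(A)` a.e. and `B ≠ A` a.e. -/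
def PrecStrict (T : Lp ℝ p μ →L[ℝ] Lp ℝ p μ) (B A : Set Ω) : Prop :=
  Prec T B A ∧ ¬ (B =ᵐ[μ] A)

/-- A critical atom: a `T`-atom whose spectral radius equals that of `T`. -/
def CriticalAtom (T : Lp ℝ p μ →L[ℝ] Lp ℝ p μ) (A : Set Ω) : Prop :=
  Atom T A ∧ rhoSet T A = specRadius T

/-- There is a chain `A = A_0 ≻ A_1 ≻ ⋯ ≻ A_n` of critical atoms starting at `A`. -/
def ChainFrom (T : Lp ℝ p μ →L[ℝ] Lp ℝ p μ) (A : Set Ω) (n : ℕ) : Prop :=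
  ∃ c : ℕ → Set Ω, c 0 = A ∧ (∀ i ≤ n, CriticalAtom T (c i)) ∧
    ∀ i < n, PrecStrict T (c (i + 1)) (c i)

/-- The generalized eigenspace `⋃ₖ ker (T - λ id)^k` of `T` at `λ`. -/
def genEigenspace (T : Lp ℝ p μ →L[ℝ] Lp ℝ p μ) (l : ℝ) : Submodule ℝ (Lp ℝ p μ) :=
  ⨆ k : ℕ, LinearMap.ker ((((T - l • (1 : Lp ℝ p μ →L[ℝ] Lp ℝ p μ)) ^ k : Lp ℝ p μ →L[ℝ] Lp ℝ p μ)) : Lp ℝ p μ →ₗ[ℝ] Lp ℝ p μ)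

/-- The algebraic multiplicity of `λ` for `T`. -/
def algMult (T : Lp ℝ p μ →L[ℝ] Lp ℝ p μ) (l : ℝ) : ℕ :=
  Module.finrank ℝ ↥(genEigenspace T l)

/-- The set of `k` at which the kernels of `(T - ρ(T) id)^k` stabilize; the ascent of `T`
at `ρ(T)` is its infimum. -/
def ascentSet (T : Lp ℝ p μ →L[ℝ] Lp ℝ p μ) : Set ℕ :=
  {k : ℕ | LinearMap.ker ((((T - specRadius T • (1 : Lp ℝ p μ →L[ℝ] Lp ℝ p μ)) ^ k : Lp ℝ p μ →L[ℝ] Lp ℝ p μ)) : Lp ℝ p μ →ₗ[ℝ] Lp ℝ p μ)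
      = LinearMap.ker ((((T - specRadius T • (1 : Lp ℝ p μ →L[ℝ] Lp ℝ p μ)) ^ (k + 1) : Lp ℝ p μ →L[ℝ] Lp ℝ p μ)) : Lp ℝ p μ →ₗ[ℝ] Lp ℝ p μ)}

/-- `D` is (a version of) the set `T(C)`, i.e. the support of `T(1_C f)` for any a.e.
positive `f ∈ Lp`. -/
def IsImage (T : Lp ℝ p μ →L[ℝ] Lp ℝ p μ) (C D : Set Ω) : Prop :=
  MeasurableSet C ∧ MeasurableSet D ∧
    ∀ f : Lp ℝ p μ, (∀ᵐ x ∂μ, 0 < f x) →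
      D =ᵐ[μ] ({x | T (indicatorCLM μ p C f) x ≠ 0} : Set Ω)

/-- `D` is (a version of) the `k`-fold iterated image `T^k(C)`. -/
def IsIterImage (T : Lp ℝ p μ →L[ℝ] Lp ℝ p μ) : ℕ → Set Ω → Set Ω → Prop
  | 0, C, D => D = C
  | (k + 1), C, D => ∃ E : Set Ω, IsIterImage T k C E ∧ IsImage T E D

variable {Ω : Type*} [MeasurableSpace Ω] {μ : MeasureTheory.Measure Ω} {p : ℝ≥0∞}

section

open Topology

def AESupportedIn (f : Lp ℝ p μ) (S : Set Ω) : Prop :=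
  ∀ᵐ x ∂μ, x ∉ S → f x = 0

namespace AESupportedIn

variable {f g : Lp ℝ p μ} {S S' : Set Ω}

lemma mono (hf : AESupportedIn f S) (h : S ≤ᵐ[μ] S') : AESupportedIn f S' := by
  filter_upwards [hf, h] with x hx hSS' hxS' using hx fun hxS => hxS' (hSS' hxS)

lemma inter (hS : AESupportedIn f S) (hS' : AESupportedIn f S') : AESupportedIn f (S ∩ S') := by
  filter_upwards [hS, hS'] with x h h' hx
  by_cases hxS : x ∈ S
  · exact h' fun hxS' => hx ⟨hxS, hxS'⟩
  · exact h hxS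

lemma iInter {s : ℕ → Set Ω} (h : ∀ n, AESupportedIn f (s n)) : AESupportedIn f (⋂ n, s n) := by
  filter_upwards [ae_all_iff.2 h] with x hx hxs
  obtain ⟨n, hn⟩ := mem_iInter.not.1 hxs |> not_forall.1
  exact hx n hn

lemma add (hf : AESupportedIn f S) (hg : AESupportedIn g S) : AESupportedIn (f + g) S := by
  filter_upwards [hf, hg, Lp.coeFn_add f g] with x hfx hgx hx hxS
  rw [hx, Pi.add_apply, hfx hxS, hgx hxS, add_zero]

end AESupportedIn

lemma aeSupportedIn_empty_iff {f : Lp ℝ p μ} : AESupportedIn f ∅ ↔ f = 0 := by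
  refine ⟨fun hf => Lp.ext ?_, ?_⟩
  · filter_upwards [hf, Lp.coeFn_zero ℝ p μ] with x hx h0
    rw [hx (notMem_empty x), h0, Pi.zero_apply]
  · rintro rfl
    filter_upwards [Lp.coeFn_zero ℝ p μ] with x hx _ using hx

variable [Fact (1 ≤ p)] {T : Lp ℝ p μ →L[ℝ] Lp ℝ p μ}

section indicatorCLM

variable {S U : Set Ω}

lemma indicatorCLM_coeFn (hS : MeasurableSet S) (f : Lp ℝ p μ) :
    ⇑(indicatorCLM μ p S f) =ᵐ[μ] S.indicator f := by
  rw [indicatorCLM, dif_pos hS, LinearMap.mkContinuous_apply]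
  simp only [LinearMap.coe_mk, AddHom.coe_mk]
  exact MemLp.coeFn_toLp _

lemma indicatorCLM_nonneg (hS : MeasurableSet S) {f : Lp ℝ p μ} (hf : 0 ≤ f) :
    0 ≤ indicatorCLM μ p S f := by
  rw [← Lp.coeFn_nonneg] at hf ⊢
  filter_upwards [hf, indicatorCLM_coeFn hS f] with x hx h
  rw [h]
  exact Set.indicator_nonneg (fun _ _ => hx) x

lemma aeSupportedIn_indicatorCLM_iff (hS : MeasurableSet S) {f : Lp ℝ p μ} :
    AESupportedIn (indicatorCLM μ p S f) U ↔ AESupportedIn f (U ∪ Sᶜ) := by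
  refine eventually_congr ?_
  filter_upwards [indicatorCLM_coeFn hS f] with x hx
  by_cases hxS : x ∈ S <;> simp [hx, hxS]

lemma AESupportedIn.indicatorCLM (hS : MeasurableSet S) {f : Lp ℝ p μ} (hf : AESupportedIn f U) :
    AESupportedIn (indicatorCLM μ p S f) (S ∩ U) := by
  filter_upwards [hf, indicatorCLM_coeFn hS f] with x hx h hxSU
  by_cases hxS : x ∈ S
  · rw [h, indicator_of_mem hxS, hx fun hxU => hxSU ⟨hxS, hxU⟩]
  · rw [h, indicator_of_notMem hxS]

lemma indicatorCLM_eq_self (hS : MeasurableSet S) {f : Lp ℝ p μ} (hf : AESupportedIn f S) :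
    indicatorCLM μ p S f = f := by
  refine Lp.ext ?_
  filter_upwards [hf, indicatorCLM_coeFn hS f] with x hx h
  by_cases hxS : x ∈ S
  · rw [h, indicator_of_mem hxS]
  · rw [h, indicator_of_notMem hxS, hx hxS]

lemma indicatorCLM_add_compl (hS : MeasurableSet S) (f : Lp ℝ p μ) :
    indicatorCLM μ p S f + indicatorCLM μ p Sᶜ f = f := by
  refine Lp.ext ?_
  filter_upwards [Lp.coeFn_add (indicatorCLM μ p S f) (indicatorCLM μ p Sᶜ f),
    indicatorCLM_coeFn hS f, indicatorCLM_coeFn hS.compl f] with x h h₁ h₂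
  rw [h, Pi.add_apply, h₁, h₂, indicator_self_add_compl_apply]

lemma isClosed_setOf_aeSupportedIn (hU : MeasurableSet U) :
    IsClosed {f : Lp ℝ p μ | AESupportedIn f U} := by
  have h : {f : Lp ℝ p μ | AESupportedIn f U} = indicatorCLM μ p Uᶜ ⁻¹' {0} := by
    ext f
    rw [mem_preimage, mem_singleton_iff, ← aeSupportedIn_empty_iff,
      aeSupportedIn_indicatorCLM_iff hU.compl, empty_union, compl_compl]
    rfl
  rw [h]
  exact isClosed_singleton.preimage (indicatorCLM μ p Uᶜ).continuous

end indicatorCLM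

/-- `Invariant T A` is definitionally `MeasurableSet A ∧ MapsSupport T A A`. -/
def MapsSupport (T : Lp ℝ p μ →L[ℝ] Lp ℝ p μ) (S U : Set Ω) : Prop :=
  ∀ f : Lp ℝ p μ, 0 ≤ f → AESupportedIn f S → AESupportedIn (T f) U

lemma tendsto_indicatorCLM_of_monotone (hp' : p ≠ ∞) {R : ℕ → Set Ω}
    (hR : ∀ n, MeasurableSet (R n)) (hmono : Monotone R) {f : Lp ℝ p μ}
    (hf : AESupportedIn f (⋃ n, R n)) :
    Tendsto (fun n => indicatorCLM μ p (R n) f) atTop (𝓝 f) := by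
  have hp0 : p ≠ 0 := (zero_lt_one.trans_le (Fact.out : 1 ≤ p)).ne'
  -- the `p`-th power of the norm of `1_S f` is the measure of `S` for the density `‖f‖ₑ ^ p`
  set ν := μ.withDensity fun x => ‖f x‖ₑ ^ p.toReal
  have hnorm : ∀ S, MeasurableSet S → ‖indicatorCLM μ p S f‖ = (ν S ^ p.toReal⁻¹).toReal := by
    intro S hS
    rw [Lp.norm_def, eLpNorm_congr_ae (indicatorCLM_coeFn hS f),
      eLpNorm_indicator_eq_eLpNorm_restrict hS, eLpNorm_eq_lintegral_rpow_enorm_toReal hp0 hp',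
      withDensity_apply _ hS, one_div]
  have hν : Tendsto (fun n => ν (R n)ᶜ) atTop (𝓝 0) := by
    have hfin : ν (R 0)ᶜ ≠ ∞ := (measure_mono (subset_univ _)).trans_lt (by
      rw [withDensity_apply _ MeasurableSet.univ, Measure.restrict_univ]
      exact lintegral_rpow_enorm_lt_top_of_eLpNorm_lt_top hp0 hp' (Lp.eLpNorm_lt_top f)) |>.ne
    have hlim := tendsto_measure_iInter_atTop (fun n => (hR n).compl.nullMeasurableSet)
      (fun m n hmn => compl_subset_compl.2 (hmono hmn)) ⟨0, hfin⟩
    have hν0 : ν (⋂ n, (R n)ᶜ) = 0 := by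
      rw [← compl_iUnion, withDensity_apply _ (MeasurableSet.iUnion hR).compl]
      refine (setLIntegral_eq_zero_iff' (MeasurableSet.iUnion hR).compl ?_).2 ?_
      · exact ((Lp.aestronglyMeasurable f).enorm.pow_const _).restrict
      · filter_upwards [hf] with x hx hxR
        simp [hx hxR, ENNReal.toReal_pos hp0 hp']
    rwa [hν0] at hlim
  have hsub : ∀ n, indicatorCLM μ p (R n) f - f = -indicatorCLM μ p (R n)ᶜ f := fun n => by
    rw [eq_neg_iff_add_eq_zero, sub_add_eq_add_sub, indicatorCLM_add_compl (hR n), sub_self]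
  rw [tendsto_iff_norm_sub_tendsto_zero]
  simp_rw [hsub, norm_neg, hnorm _ (hR _).compl]
  have hrpow := (ENNReal.continuous_rpow_const (y := p.toReal⁻¹).tendsto 0).comp hν
  rw [ENNReal.zero_rpow_of_pos (inv_pos.2 (ENNReal.toReal_pos hp0 hp'))] at hrpow
  exact (ENNReal.tendsto_toReal ENNReal.zero_ne_top).comp hrpow

namespace MapsSupport

variable {S S' S₁ S₂ U U' : Set Ω}

lemma mono (h : MapsSupport T S U) (hS : S' ≤ᵐ[μ] S) (hU : U ≤ᵐ[μ] U') : MapsSupport T S' U' :=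
  fun f hf hfS => (h f hf (hfS.mono hS)).mono hU

lemma inter (h : MapsSupport T S U) (h' : MapsSupport T S U') : MapsSupport T S (U ∩ U') :=
  fun f hf hfS => (h f hf hfS).inter (h' f hf hfS)

lemma iInter {u : ℕ → Set Ω} (h : ∀ n, MapsSupport T S (u n)) : MapsSupport T S (⋂ n, u n) :=
  fun f hf hfS => AESupportedIn.iInter fun n => h n f hf hfS

lemma union (hS₁ : MeasurableSet S₁) (h₁ : MapsSupport T S₁ U) (h₂ : MapsSupport T S₂ U) :
    MapsSupport T (S₁ ∪ S₂) U := by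
  intro f hf hfS
  have hS₂ : S₁ᶜ ∩ (S₁ ∪ S₂) ⊆ S₂ := fun x hx => hx.2.resolve_left hx.1
  rw [← indicatorCLM_add_compl hS₁ f, map_add]
  exact (h₁ _ (indicatorCLM_nonneg hS₁ hf)
      ((hfS.indicatorCLM hS₁).mono inter_subset_left.eventuallyLE)).add
    (h₂ _ (indicatorCLM_nonneg hS₁.compl hf) ((hfS.indicatorCLM hS₁.compl).mono hS₂.eventuallyLE))

/-- `f` is the `Lp`-limit of its restrictions to the finite partial unions, and `T` is
continuous. -/
lemma iUnion (hp' : p ≠ ∞) {s : ℕ → Set Ω} (hs : ∀ n, MeasurableSet (s n))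
    (hU : MeasurableSet U) (h : ∀ n, MapsSupport T (s n) U) : MapsSupport T (⋃ n, s n) U := by
  have hmeas : ∀ n, MeasurableSet (accumulate s n) := fun n =>
    MeasurableSet.biUnion (to_countable _) fun k _ => hs k
  have hacc : ∀ n, MapsSupport T (accumulate s n) U := by
    intro n
    induction n with
    | zero => simpa using h 0
    | succ n ih => rw [accumulate_succ]; exact ih.union (hmeas n) (h (n + 1))
  intro f hf hfs
  rw [← iUnion_accumulate] at hfs
  refine (isClosed_setOf_aeSupportedIn hU).mem_of_tendsto
    ((T.continuous.tendsto f).comp (tendsto_indicatorCLM_of_monotone hp' hmeas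
      monotone_accumulate hfs)) (Eventually.of_forall fun n => ?_)
  exact hacc n _ (indicatorCLM_nonneg (hmeas n) hf)
    ((hfs.indicatorCLM (hmeas n)).mono inter_subset_left.eventuallyLE)

end MapsSupport

lemma mapsSupport_restrictOp_iff {A S U : Set Ω} (hA : MeasurableSet A) (hSA : S ≤ᵐ[μ] A) :
    MapsSupport (restrictOp T A) S U ↔ MapsSupport T S (U ∪ Aᶜ) := by
  refine forall_congr' fun f => imp_congr_right fun _ => imp_congr_right fun hf => ?_
  rw [restrictOp, ContinuousLinearMap.comp_apply, ContinuousLinearMap.comp_apply,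
    indicatorCLM_eq_self hA (hf.mono hSA)]
  exact aeSupportedIn_indicatorCLM_iff hA

section InvariantSets

variable {A B C N : Set Ω}

lemma Invariant.mapsSupport (hB : Invariant T B) : MapsSupport T B B :=
  hB.2

lemma ae_le_inter (hB : A ≤ᵐ[μ] B) (hC : A ≤ᵐ[μ] C) : A ≤ᵐ[μ] (B ∩ C : Set Ω) := by
  simpa only [inter_self] using ae_le_set_inter hB hC

lemma invariant_univ : Invariant T (univ : Set Ω) :=
  ⟨MeasurableSet.univ, fun _ _ _ => Eventually.of_forall fun x hx => absurd (mem_univ x) hx⟩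

lemma invariant_of_measure_eq_zero (hN : MeasurableSet N) (h : μ N = 0) : Invariant T N := by
  refine ⟨hN, fun f _ hf => ?_⟩
  have hf0 : AESupportedIn f ∅ := AESupportedIn.mono hf (ae_le_set.2 (by rwa [sdiff_empty]))
  rw [aeSupportedIn_empty_iff.1 hf0, map_zero]
  exact (aeSupportedIn_empty_iff.2 rfl).mono (empty_subset N).eventuallyLE

lemma Invariant.inter (hB : Invariant T B) (hC : Invariant T C) : Invariant T (B ∩ C) :=
  ⟨hB.1.inter hC.1, (hB.mapsSupport.mono inter_subset_left.eventuallyLE .rfl).inter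
    (hC.mapsSupport.mono inter_subset_right.eventuallyLE .rfl)⟩

lemma Invariant.union (hB : Invariant T B) (hC : Invariant T C) : Invariant T (B ∪ C) :=
  ⟨hB.1.union hC.1, (hB.mapsSupport.mono .rfl subset_union_left.eventuallyLE).union hB.1
    (hC.mapsSupport.mono .rfl subset_union_right.eventuallyLE)⟩

lemma Invariant.iInter {s : ℕ → Set Ω} (hs : ∀ n, Invariant T (s n)) :
    Invariant T (⋂ n, s n) :=
  ⟨.iInter fun n => (hs n).1, MapsSupport.iInter fun n =>
    (hs n).mapsSupport.mono (iInter_subset s n).eventuallyLE .rfl⟩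

lemma Invariant.iUnion (hp' : p ≠ ∞) {s : ℕ → Set Ω} (hs : ∀ n, Invariant T (s n)) :
    Invariant T (⋃ n, s n) :=
  ⟨.iUnion fun n => (hs n).1, MapsSupport.iUnion hp' (fun n => (hs n).1)
    (.iUnion fun n => (hs n).1) fun n =>
      (hs n).mapsSupport.mono .rfl (subset_iUnion s n).eventuallyLE⟩

lemma Invariant.coInvariant_compl (hB : Invariant T B) : CoInvariant T Bᶜ := by
  rwa [CoInvariant, compl_compl]

lemma CoInvariant.measurableSet (hB : CoInvariant T B) : MeasurableSet B :=
  hB.1.of_compl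

lemma coInvariant_univ : CoInvariant T (univ : Set Ω) := by
  rw [CoInvariant, compl_univ]
  exact invariant_of_measure_eq_zero .empty measure_empty

lemma CoInvariant.inter (hB : CoInvariant T B) (hC : CoInvariant T C) : CoInvariant T (B ∩ C) := by
  rw [CoInvariant, compl_inter]
  exact hB.union hC

lemma CoInvariant.iInter (hp' : p ≠ ∞) {s : ℕ → Set Ω} (hs : ∀ n, CoInvariant T (s n)) :
    CoInvariant T (⋂ n, s n) := by
  rw [CoInvariant, compl_iInter]
  exact .iUnion hp' hs

/-- A finite measure `ν` with `μ ≪ ν` attains its infimum over the sets of the class containing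
`A` at the intersection of a minimizing sequence. -/
lemma exists_ae_minimal_superset [SFinite μ] (P : Set Ω → Prop)
    (hmeas : ∀ B, P B → MeasurableSet B) (hinter : ∀ B C, P B → P C → P (B ∩ C))
    (hiInter : ∀ s : ℕ → Set Ω, (∀ n, P (s n)) → P (⋂ n, s n)) (hA : ∃ B, P B ∧ A ≤ᵐ[μ] B) :
    ∃ M, P M ∧ A ≤ᵐ[μ] M ∧ ∀ B, P B → A ≤ᵐ[μ] B → M ≤ᵐ[μ] B := by
  obtain ⟨ν, _, hμν, -⟩ := exists_isFiniteMeasure_absolutelyContinuous μ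
  set 𝒞 := {B | P B ∧ A ≤ᵐ[μ] B}
  obtain ⟨u, -, hu, hu𝒞⟩ := exists_seq_tendsto_sInf (S := (fun B => ν B) '' 𝒞)
    (Nonempty.image _ hA) (OrderBot.bddBelow _)
  simp only [mem_image] at hu𝒞
  choose s hs hsu using hu𝒞
  have hM : ⋂ n, s n ∈ 𝒞 := ⟨hiInter s fun n => (hs n).1, by
    filter_upwards [ae_all_iff.2 fun n => (hs n).2] with x hx hxA using mem_iInter.2 (hx · hxA)⟩
  have hνM : ν (⋂ n, s n) ≤ sInf ((fun B => ν B) '' 𝒞) :=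
    ge_of_tendsto' hu fun n => hsu n ▸ measure_mono (iInter_subset s n)
  refine ⟨⋂ n, s n, hM.1, hM.2, fun B hB hAB => ae_le_set.2 (hμν ?_)⟩
  have hMB : ν (⋂ n, s n) ≤ ν ((⋂ n, s n) ∩ B) :=
    hνM.trans (sInf_le ⟨_, ⟨hinter _ _ hM.1 hB, ae_le_inter hM.2 hAB⟩, rfl⟩)
  rw [← sdiff_self_inter, measure_sdiff inter_subset_left
    (hmeas _ (hinter _ _ hM.1 hB)).nullMeasurableSet (measure_ne_top _ _), tsub_eq_zero_of_le hMB]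

lemma exists_isFuture [SFinite μ] (T : Lp ℝ p μ →L[ℝ] Lp ℝ p μ) (A : Set Ω) :
    ∃ FA, IsFuture T A FA :=
  exists_ae_minimal_superset (Invariant T) (fun _ hB => hB.1) (fun _ _ => .inter)
    (fun _ => .iInter) ⟨univ, invariant_univ, (subset_univ A).eventuallyLE⟩

lemma exists_isPast [SFinite μ] (hp' : p ≠ ∞) (T : Lp ℝ p μ →L[ℝ] Lp ℝ p μ) (A : Set Ω) :
    ∃ PA, IsPast T A PA :=
  exists_ae_minimal_superset (CoInvariant T) (fun _ hB => hB.measurableSet)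
    (fun _ _ => .inter) (fun _ => .iInter hp')
    ⟨univ, coInvariant_univ, (subset_univ A).eventuallyLE⟩

lemma ae_le_inter_of_isFuture_of_isPast {FA PA : Set Ω} (hFA : IsFuture T A FA)
    (hPA : IsPast T A PA) : A ≤ᵐ[μ] (FA ∩ PA : Set Ω) :=
  ae_le_inter hFA.2.1 hPA.2.1

end InvariantSets

section Admissible

variable {A B D : Set Ω}

lemma Invariant.admissible (hB : Invariant T B) : Admissible T B :=
  MeasurableSpace.measurableSet_generateFrom hB

lemma CoInvariant.admissible (hB : CoInvariant T B) : Admissible T B :=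
  compl_compl B ▸ (Invariant.admissible hB).compl

lemma Admissible.measurableSet (hA : Admissible T A) : MeasurableSet A :=
  MeasurableSpace.generateFrom_le (fun _ hB => hB.1) _ hA

/-- Null sets are invariant, hence admissible. -/
lemma Admissible.congr (hA : Admissible T A) (hB : MeasurableSet B) (h : A =ᵐ[μ] B) :
    Admissible T B := by
  have hnull : Admissible T (symmDiff A B) :=
    (invariant_of_measure_eq_zero (hA.measurableSet.symmDiff hB)
      (measure_symmDiff_eq_zero_iff.2 h)).admissible
  rw [← symmDiff_symmDiff_cancel_left A B]
  exact hA.symmDiff hnull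

end Admissible

lemma measure_eq_zero_of_ae_le_compl {A : Set Ω} (h : A ≤ᵐ[μ] (Aᶜ : Set Ω)) : μ A = 0 := by
  rwa [ae_le_set, sdiff_compl, inter_self] at h

def Indecomposable (T : Lp ℝ p μ →L[ℝ] Lp ℝ p μ) (A : Set Ω) : Prop :=
  ∀ B, Invariant T B → A ≤ᵐ[μ] B ∨ A ≤ᵐ[μ] (Bᶜ : Set Ω)

section Indecomposable

variable {A K : Set Ω}

lemma indecomposable_of_forall_inter
    (h : ∀ B, Invariant T B → μ (B ∩ A) = 0 ∨ (B ∩ A : Set Ω) =ᵐ[μ] A) : Indecomposable T A := by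
  refine fun B hB => (h B hB).symm.imp (fun hBA => ?_) fun hBA => ?_
  · exact hBA.symm.le.trans inter_subset_left.eventuallyLE
  · rwa [ae_le_set, sdiff_compl, inter_comm]

/-- The sets on one side of which `K` lies form a σ-algebra containing the invariant sets. -/
lemma Indecomposable.ae_le_or_ae_le_compl (hK : Indecomposable T K) {D : Set Ω}
    (hD : Admissible T D) : K ≤ᵐ[μ] D ∨ K ≤ᵐ[μ] (Dᶜ : Set Ω) := by
  induction D, hD using MeasurableSpace.generateFrom_induction with
  | hC B hB _ => exact hK B hB
  | empty => exact .inr (by rw [compl_empty]; exact (subset_univ K).eventuallyLE)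
  | compl D _ ih => rw [compl_compl]; exact ih.symm
  | iUnion s _ ih =>
    by_cases h : ∃ n, K ≤ᵐ[μ] s n
    · obtain ⟨n, hn⟩ := h
      exact .inl (hn.trans (subset_iUnion s n).eventuallyLE)
    · push Not at h
      refine .inr ?_
      rw [compl_iUnion]
      filter_upwards [ae_all_iff.2 fun n => (ih n).resolve_left (h n)] with x hx hxK
      exact mem_iInter.2 fun n => hx n hxK

lemma Indecomposable.ae_eq_of_admissible (hK : Indecomposable T K) {A : Set Ω}
    (hA : Admissible T A) (hpos : 0 < μ A) (hAK : A ≤ᵐ[μ] K) : K =ᵐ[μ] A := by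
  refine (hK.ae_le_or_ae_le_compl hA).elim (fun h => h.antisymm hAK) fun h => ?_
  exact absurd (measure_eq_zero_of_ae_le_compl (hAK.trans h)) hpos.ne'

lemma Atom.indecomposable (hA : Atom T A) : Indecomposable T A :=
  indecomposable_of_forall_inter fun _ hB =>
    hA.2.2 _ (hB.admissible.inter hA.1) inter_subset_right.eventuallyLE

lemma atom_of_indecomposable (hA : Admissible T A) (hpos : 0 < μ A) (hind : Indecomposable T A) :
    Atom T A :=
  ⟨hA, hpos, fun _ hD hDA => (hind.ae_le_or_ae_le_compl hD).symm.imp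
    (fun h => measure_eq_zero_of_ae_le_compl (hDA.trans h)) hDA.antisymm⟩

lemma Invariant.inter_restrictOp {B : Set Ω} (hB : Invariant T B) (hA : MeasurableSet A) :
    Invariant (restrictOp T A) (B ∩ A) := by
  refine ⟨hB.1.inter hA, (mapsSupport_restrictOp_iff hA inter_subset_right.eventuallyLE).2 ?_⟩
  exact hB.mapsSupport.mono inter_subset_left.eventuallyLE
    (subset_union_compl_iff_inter_subset.2 subset_rfl).eventuallyLE

lemma Irreducible.indecomposable (hA : Irreducible T A) : Indecomposable T A :=
  indecomposable_of_forall_inter fun _ hB =>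
    hA.2.2 _ (hB.inter_restrictOp hA.1) inter_subset_right.eventuallyLE

lemma Indecomposable.inter_of_isFuture_of_isPast (hA : Indecomposable T A) {FA PA : Set Ω}
    (hFA : IsFuture T A FA) (hPA : IsPast T A PA) : Indecomposable T (FA ∩ PA) :=
  fun B hB => (hA B hB).imp
    (fun h => inter_subset_left.eventuallyLE.trans (hFA.2.2 B hB h))
    (fun h => inter_subset_right.eventuallyLE.trans (hPA.2.2 _ hB.coInvariant_compl h))

end Indecomposable

section Convexe

variable {A : Set Ω}

lemma Convexe.admissible (hA : Convexe T A) : Admissible T A := by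
  obtain ⟨hAm, FA, PA, hFA, hPA, h⟩ := hA
  exact Admissible.congr (hFA.1.admissible.inter hPA.1.admissible) hAm h.symm

lemma convexe_of_ae_eq_inter [SFinite μ] (hp' : p ≠ ∞) (hA : MeasurableSet A) {F P : Set Ω}
    (hF : Invariant T F) (hP : CoInvariant T P) (h : A =ᵐ[μ] (F ∩ P : Set Ω)) : Convexe T A := by
  obtain ⟨FA, hFA⟩ := exists_isFuture T A
  obtain ⟨PA, hPA⟩ := exists_isPast hp' T A
  refine ⟨hA, FA, PA, hFA, hPA, (ae_le_inter_of_isFuture_of_isPast hFA hPA).antisymm ?_⟩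
  exact (ae_le_set_inter (hFA.2.2 F hF (h.le.trans inter_subset_left.eventuallyLE))
    (hPA.2.2 P hP (h.le.trans inter_subset_right.eventuallyLE))).trans h.symm.le

lemma convexe_inter_of_isFuture_of_isPast [SFinite μ] (hp' : p ≠ ∞) {FA PA : Set Ω}
    (hFA : IsFuture T A FA) (hPA : IsPast T A PA) : Convexe T (FA ∩ PA) :=
  convexe_of_ae_eq_inter hp' (hFA.1.1.inter hPA.1.measurableSet) hFA.1 hPA.1 EventuallyEq.rfl

lemma Convexe.inter_invariant [SFinite μ] (hp' : p ≠ ∞) (hA : Convexe T A) {G : Set Ω}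
    (hG : Invariant T G) : Convexe T (G ∩ A) := by
  obtain ⟨hAm, FA, PA, hFA, hPA, h⟩ := hA
  refine convexe_of_ae_eq_inter hp' (hG.1.inter hAm) (hG.inter hFA.1) hPA.1 ?_
  rw [inter_assoc]
  exact EventuallyEq.rfl.inter h

lemma Atom.convexe [SFinite μ] (hp' : p ≠ ∞) (hA : Atom T A) : Convexe T A := by
  obtain ⟨FA, hFA⟩ := exists_isFuture T A
  obtain ⟨PA, hPA⟩ := exists_isPast hp' T A
  refine ⟨hA.1.measurableSet, FA, PA, hFA, hPA, ?_⟩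
  exact ((hA.indecomposable.inter_of_isFuture_of_isPast hFA hPA).ae_eq_of_admissible hA.1 hA.2.1
    (ae_le_inter_of_isFuture_of_isPast hFA hPA)).symm

/-- A `T_A`-invariant part `B` of a convex set `A` is the trace on `A` of the `T`-invariant set
`B ∪ (F(B) \ P(A \ B))`. -/
lemma Convexe.exists_invariant_inter_ae_eq [SFinite μ] (hp' : p ≠ ∞) (hA : Convexe T A)
    {B : Set Ω} (hB : Invariant (restrictOp T A) B) (hBA : B ≤ᵐ[μ] A) :
    ∃ G, Invariant T G ∧ (G ∩ A : Set Ω) =ᵐ[μ] B := by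
  obtain ⟨hAm, FA, PA, hFA, hPA, hAK⟩ := hA
  obtain ⟨FB, hFB⟩ := exists_isFuture T B
  obtain ⟨PC, hPC⟩ := exists_isPast hp' T (A \ B)
  have hFBPC : (FB ∩ PC : Set Ω) ≤ᵐ[μ] A :=
    (ae_le_set_inter (hFB.2.2 _ hFA.1 (hBA.trans hFA.2.1))
      (hPC.2.2 _ hPA.1 (sdiff_subset.eventuallyLE.trans hPA.2.1))).trans hAK.symm.le
  have hTB : MapsSupport T B (B ∪ FB ∩ PCᶜ) := by
    refine ((hFB.1.mapsSupport.mono hFB.2.1 .rfl).inter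
      ((mapsSupport_restrictOp_iff hAm hBA).1 hB.mapsSupport)).mono .rfl ?_
    filter_upwards [hFBPC] with x hx
    rintro ⟨hxFB, hxB | hxA⟩
    · exact .inl hxB
    · exact .inr ⟨hxFB, fun hxPC => hxA (hx ⟨hxFB, hxPC⟩)⟩
  refine ⟨B ∪ FB ∩ PCᶜ, ⟨hB.1.union (hFB.1.1.inter hPC.1.1), hTB.union hB.1 ?_⟩, ?_⟩
  · exact (hFB.1.inter hPC.1).mapsSupport.mono .rfl subset_union_right.eventuallyLE
  · filter_upwards [hPC.2.1, hBA] with x hxPC hxBA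
    exact propext ⟨fun ⟨hxG, hxA⟩ => hxG.elim id fun h =>
      by_contra fun hxB => h.2 (hxPC ⟨hxA, hxB⟩), fun hxB => ⟨.inl hxB, hxBA hxB⟩⟩

lemma Convexe.irreducible [SFinite μ] (hp' : p ≠ ∞) (hA : Convexe T A) (hpos : 0 < μ A)
    (hind : Indecomposable T A) : Irreducible T A := by
  refine ⟨hA.1, hpos, fun B hB hBA => ?_⟩
  obtain ⟨G, hG, hGA⟩ := hA.exists_invariant_inter_ae_eq hp' hB hBA
  refine (hind G hG).symm.imp (fun h => ?_) fun h => ?_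
  · rw [← measure_congr hGA]
    rwa [ae_le_set, sdiff_compl, inter_comm] at h
  · exact hGA.symm.trans (inter_subset_right.eventuallyLE.antisymm (ae_le_inter h .rfl))

end Convexe

end

theorem statement0_general [SigmaFinite μ] [Fact (1 ≤ p)] (hp' : p ≠ ∞)
    (T : Lp ℝ p μ →L[ℝ] Lp ℝ p μ) (A : Set Ω) :
    List.TFAE
      [ Atom T A,
        Convexe T A ∧ 0 < μ A ∧
          ∀ B : Set Ω, Convexe T B → B ≤ᵐ[μ] A → μ B = 0 ∨ B =ᵐ[μ] A,
        Admissible T A ∧ Irreducible T A,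
        Irreducible T A ∧ ∀ A' : Set Ω, Irreducible T A' → A ≤ᵐ[μ] A' → A' =ᵐ[μ] A ] := by
  tfae_have 1 → 2 := fun hA =>
    ⟨hA.convexe hp', hA.2.1, fun B hB hBA => hA.2.2 B hB.admissible hBA⟩
  tfae_have 2 → 3 := fun ⟨hA, hpos, hmin⟩ =>
    ⟨hA.admissible, hA.irreducible hp' hpos <| indecomposable_of_forall_inter fun _ hB =>
      hmin _ (hA.inter_invariant hp' hB) inter_subset_right.eventuallyLE⟩
  tfae_have 3 → 1 := fun ⟨hadm, hirr⟩ =>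
    atom_of_indecomposable hadm hirr.2.1 hirr.indecomposable
  tfae_have 3 → 4 := fun ⟨hadm, hirr⟩ =>
    ⟨hirr, fun _ hA' hAA' => hA'.indecomposable.ae_eq_of_admissible hadm hirr.2.1 hAA'⟩
  tfae_have 4 → 3 := by
    rintro ⟨hirr, hmax⟩
    obtain ⟨FA, hFA⟩ := exists_isFuture T A
    obtain ⟨PA, hPA⟩ := exists_isPast hp' T A
    have hAK := ae_le_inter_of_isFuture_of_isPast hFA hPA
    have hK := convexe_inter_of_isFuture_of_isPast hp' hFA hPA
    have hKirr : Irreducible T (FA ∩ PA) :=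
      hK.irreducible hp' (hirr.2.1.trans_le (measure_mono_ae hAK))
        (hirr.indecomposable.inter_of_isFuture_of_isPast hFA hPA)
    exact ⟨hK.admissible.congr hirr.1 (hmax _ hKirr hAK), hirr⟩
  tfae_finish

theorem statement0 [SigmaFinite μ] (hμ : μ Set.univ ≠ 0) [Fact (1 ≤ p)]
    (hp : 1 < p) (hp' : p ≠ ∞)
    (T : Lp ℝ p μ →L[ℝ] Lp ℝ p μ) (hT : IsPositiveOp T)
    (A : Set Ω) (hA : MeasurableSet A) :
    List.TFAE
      [ Atom T A,
        Convexe T A ∧ 0 < μ A ∧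
          ∀ B : Set Ω, Convexe T B → B ≤ᵐ[μ] A → μ B = 0 ∨ B =ᵐ[μ] A,
        Admissible T A ∧ Irreducible T A,
        Irreducible T A ∧ ∀ A' : Set Ω, Irreducible T A' → A ≤ᵐ[μ] A' → A' =ᵐ[μ] A ] :=
  statement0_general hp' T A

end PaperAtoms
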